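/- arXiv:2403.13862 — 6 statements merged into one kernel-verified Lean document; each statement's English description precedes it below -/
import Mathlib

section
/- For constants L_T, R_T, c > 0, the function L_T ↦ (L_T + R_T + c)/2 - sqrt(((L_T + R_T + c)/2)² - L_T·R_T) is strictly increasing on (0, ∞). -/
/-- For constants R_T, c > 0, the function
L_T ↦ (L_T+R_T+c)/2 - sqrt(((L_T+R_T+c)/2)² - L_T·R_T) is strictly increasing on (0,∞). -/
theorem stmt_2 (RT c : ℝ) (hR : 0 < RT) (hc : 0 < c) :
    StrictMonoOn
      (fun LT : ℝ => (LT + RT + c) / 2 - Real.sqrt (((LT + RT + c) / 2) ^ 2 - LT * RT))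
      (Set.Ioi 0) := by
  intro a ha b hb hab
  simp only [Set.mem_Ioi] at ha hb
  have hApos : 0 < ((a + RT + c) / 2) ^ 2 - a * RT := by
    nlinarith [sq_nonneg (a - RT + c), mul_pos hc hR]
  have hBpos : 0 < ((b + RT + c) / 2) ^ 2 - b * RT := by
    nlinarith [sq_nonneg (b - RT + c), mul_pos hc hR]
  set A := ((a + RT + c) / 2) ^ 2 - a * RT with hAdef
  set B := ((b + RT + c) / 2) ^ 2 - b * RT with hBdef
  clear_value A B
  have hsA : Real.sqrt A ^ 2 = A := Real.sq_sqrt hApos.le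
  have hkey : (a - RT + c) / 2 < Real.sqrt A := by
    nlinarith [Real.sqrt_nonneg A, hsA, hAdef, mul_pos hc hR, sq_nonneg (Real.sqrt A - (a - RT + c) / 2), sq_nonneg (Real.sqrt A + (a - RT + c) / 2)]
  have hpos : 0 < Real.sqrt A + (b - a) / 2 := by
    have := Real.sqrt_nonneg A; linarith
  have hlt : Real.sqrt B < Real.sqrt A + (b - a) / 2 := by
    rw [Real.sqrt_lt' hpos]
    have h1 : (b - a) * ((a - RT + c) / 2) < (b - a) * Real.sqrt A :=
      mul_lt_mul_of_pos_left hkey (by linarith)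
    nlinarith [hsA, hAdef, hBdef, h1]
  show (a + RT + c) / 2 - Real.sqrt (((a + RT + c) / 2) ^ 2 - a * RT) <
      (b + RT + c) / 2 - Real.sqrt (((b + RT + c) / 2) ^ 2 - b * RT)
  rw [← hAdef, ← hBdef]
  linarith
end

section
/- Suppose 0 = f(x*(u)) + e₁·((u+k_on)(x_T - x*_1) - k_off·x*_1) defines a C¹ steady-state curve x*(u), with J* = Df(x*(u)) and A = J* - (u+k_on+k_off)·E₁₁ invertible, where E₁₁ is the matrix with a 1 in position (1,1) and 0 elsewhere. Then ∂_u x*_j(u) = (-1)^j·(x_T - x*_1)·J*[1̂, ĵ] / det A, where J*[1̂, ĵ] is the minor of J* obtained by deleting row 1 and column j. In particular A[1̂, ĵ] = J*[1̂, ĵ] since A and J* differ only in the first row. -/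
open Matrix

/-- Activation control: if 0 = f(x*(u)) + e₁·((u+k_on)(x_T - x*_1) - k_off x*_1) defines a
C¹ steady-state curve x*(u), with J*(u) = Df(x*(u)) and A(u) = J*(u) - (u+k_on+k_off)·E₁₁
invertible, then ∂_u x*_j(u) = (-1)^(j+1)·(x_T - x*_1)·J*[1̂, ĵ] / det A(u) (zero-based
indices, so the 1-based sign (-1)^j becomes (-1)^(j+1)); in particular the corresponding
minors of A(u) and J*(u) agree, since A and J* differ only in the first row. -/
theorem stmt_10 (n : ℕ) (kon koff xT : ℝ) (hkon : 0 < kon) (hkoff : 0 < koff)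
    (hxT : 0 < xT)
    (f : (Fin (n + 1) → ℝ) → (Fin (n + 1) → ℝ))
    (x : ℝ → (Fin (n + 1) → ℝ)) (x' : ℝ → (Fin (n + 1) → ℝ))
    (J : ℝ → Matrix (Fin (n + 1)) (Fin (n + 1)) ℝ)
    (A : ℝ → Matrix (Fin (n + 1)) (Fin (n + 1)) ℝ)
    (hA : ∀ u, A u = J u - (u + kon + koff) • Matrix.single 0 0 1)
    (hss : ∀ u i, f (x u) i
      + (if i = 0 then (u + kon) * (xT - x u 0) - koff * x u 0 else 0) = 0)
    (hx : ∀ u, HasDerivAt x (x' u) u)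
    (hJ : ∀ u, HasFDerivAt f ((J u).mulVecLin.toContinuousLinearMap) (x u))
    (hdet : ∀ u, (A u).det ≠ 0) :
    ∀ u, ∀ j : Fin (n + 1),
      x' u j = (-1 : ℝ) ^ ((j : ℕ) + 1) * (xT - x u 0)
          * ((J u).submatrix (Fin.succAbove 0) (Fin.succAbove j)).det / (A u).det ∧
      ((A u).submatrix (Fin.succAbove 0) (Fin.succAbove j)).det
        = ((J u).submatrix (Fin.succAbove 0) (Fin.succAbove j)).det := by
  intro u j
  -- minors agree
  have hminor : ((A u).submatrix (Fin.succAbove 0) (Fin.succAbove j)).det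
      = ((J u).submatrix (Fin.succAbove 0) (Fin.succAbove j)).det := by
    congr 1
    ext a b
    simp [hA, Matrix.submatrix_apply, Matrix.single]
    intro h _
    exact absurd h.symm (Fin.succ_ne_zero a)
  refine ⟨?_, hminor⟩
  -- derivative of each component of f ∘ x
  have hcomp : HasDerivAt (fun u' => f (x u')) ((J u).mulVec (x' u)) u := by
    have := (hJ u).comp_hasDerivAt u (hx u)
    exact this
  have hcompi : ∀ i, HasDerivAt (fun u' => f (x u') i) ((J u).mulVec (x' u) i) u :=
    hasDerivAt_pi.mp hcomp
  have hx0 : HasDerivAt (fun u' => x u' 0) (x' u 0) u := hasDerivAt_pi.mp (hx u) 0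
  -- the key linear equation
  have hkey : ∀ i : Fin (n + 1), (J u).mulVec (x' u) i
      + (if i = 0 then (xT - x u 0) - (u + kon + koff) * x' u 0 else 0) = 0 := by
    intro i
    by_cases hi : i = 0
    · subst hi
      have hg := (((hasDerivAt_id u).add_const kon).mul
          ((hasDerivAt_const u xT).sub hx0)).sub ((hasDerivAt_const u koff).mul hx0)
      have htot := (hcompi 0).add hg
      have hzero : (fun u' => f (x u') 0
          + ((u' + kon) * (xT - x u' 0) - koff * x u' 0)) = fun _ => (0 : ℝ) := by
        funext u'
        simpa using hss u' 0
      rw [show ((fun u' => f (x u') 0) + ((fun x => id x + kon) * ((fun x => xT) - fun u' => x u' 0)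
        - (fun x => koff) * fun u' => x u' 0)) = fun _ => (0 : ℝ) from hzero] at htot
      have h0 := htot.unique (hasDerivAt_const u 0)
      simp only [id_eq, Pi.sub_apply] at h0
      rw [if_pos rfl]
      linear_combination h0
    · have hzero : (fun u' => f (x u') i) = fun _ => (0 : ℝ) := by
        funext u'
        simpa [hi] using hss u' i
      have := hcompi i
      rw [hzero] at this
      have h0 := this.unique (hasDerivAt_const u 0)
      rw [if_neg hi, add_zero]
      exact h0
  -- rewrite as A *ᵥ x' = b
  have hAmv : (A u).mulVec (x' u) = fun i => if i = 0 then -(xT - x u 0) else 0 := by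
    funext i
    have hk := hkey i
    by_cases hi : i = 0
    · subst hi
      simp only [hA, Matrix.sub_mulVec, Matrix.smul_mulVec, Pi.sub_apply, Pi.smul_apply,
        smul_eq_mul]
      have hstd : (Matrix.single (0 : Fin (n+1)) 0 (1:ℝ)).mulVec (x' u) 0 = x' u 0 := by
        simp [Matrix.mulVec, dotProduct, Matrix.single]
      rw [hstd]
      have hk' : (J u).mulVec (x' u) 0 + (xT - x u 0 - (u + kon + koff) * x' u 0) = 0 := by
        simpa using hk
      split_ifs with hcond
      · linarith
      · exact absurd trivial hcond
    · simp only [hA, Matrix.sub_mulVec, Matrix.smul_mulVec, Pi.sub_apply, Pi.smul_apply,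
        smul_eq_mul]
      have hstd : (Matrix.single (0 : Fin (n+1)) 0 (1:ℝ)).mulVec (x' u) i = 0 := by
        simp only [Matrix.mulVec, dotProduct, Matrix.single, Matrix.of_apply,
          boole_mul, mul_ite, mul_one, mul_zero]
        apply Finset.sum_eq_zero
        intro k _
        rw [if_neg]
        rintro ⟨h, -⟩
        exact hi h.symm
      rw [hstd, if_neg hi]
      rw [if_neg hi, add_zero] at hk
      linarith
  -- apply adjugate
  have hcram : (A u).det • x' u = (A u).adjugate.mulVec ((A u).mulVec (x' u)) := by
    rw [Matrix.mulVec_mulVec, Matrix.adjugate_mul]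
    simp [Matrix.smul_mulVec]
  have hj : (A u).det * x' u j
      = (A u).adjugate j 0 * (-(xT - x u 0)) := by
    have := congrFun hcram j
    rw [hAmv] at this
    simpa [Matrix.mulVec, dotProduct, Finset.sum_ite_eq', mul_comm] using this
  have hadj : (A u).adjugate j 0
      = (-1 : ℝ) ^ (j : ℕ) * ((A u).submatrix (Fin.succAbove 0) (Fin.succAbove j)).det := by
    rw [Matrix.adjugate_fin_succ_eq_det_submatrix]
    norm_num
  rw [hadj, hminor] at hj
  rw [eq_div_iff (hdet u)]
  linear_combination hj
end

section
/- Let J be an n×n real matrix with negative diagonal entries such that in the directed graph G of J (edge i→j iff J_{ji} ≠ 0, with sign sign(J_{ji})), there is no directed path from vertex 1 to vertex n (n ≥ 2). Then the minor J[1̂, n̂] (delete row 1, column n) equals 0. -/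
open Finset in
lemma det_eq_zero_of_zero_block {n : ℕ} (M : Matrix (Fin n) (Fin n) ℝ)
    (A B : Finset (Fin n)) (hcard : n < A.card + B.card)
    (h : ∀ a ∈ A, ∀ b ∈ B, M a b = 0) : M.det = 0 := by
  rw [Matrix.det_apply]
  apply Finset.sum_eq_zero
  intro σ _
  have hex : ∃ b ∈ B, σ b ∈ A := by
    by_contra hc
    push_neg at hc
    have hsub : B.image σ ⊆ Aᶜ := by
      intro x hx
      obtain ⟨b, hb, rfl⟩ := Finset.mem_image.mp hx
      simpa using hc b hb
    have h1 : B.card ≤ Aᶜ.card := by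
      have := Finset.card_le_card hsub
      rwa [Finset.card_image_of_injective _ σ.injective] at this
    have h2 : Aᶜ.card = Fintype.card (Fin n) - A.card := Finset.card_compl A
    simp only [Fintype.card_fin] at h2
    have h3 : A.card ≤ n := by simpa using Finset.card_le_card (Finset.subset_univ A)
    omega
  obtain ⟨b, hb, hab⟩ := hex
  have : ∏ i, M (σ i) i = 0 :=
    Finset.prod_eq_zero (Finset.mem_univ b) (h _ hab _ hb)
  rw [this, smul_zero]

/-- Let J be an (n+1)×(n+1) real matrix (n ≥ 1) with negative diagonal entries, and let G
be the directed graph of J (edge i→j iff J_{ji} ≠ 0). If there is no directed path from the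
first vertex to the last vertex, then the minor J[1̂, n̂] (delete first row, last column)
is zero. -/
theorem stmt_11 (n : ℕ) (hn : 1 ≤ n) (J : Matrix (Fin (n + 1)) (Fin (n + 1)) ℝ)
    (hdiag : ∀ i, J i i < 0)
    (hpath : ¬ Relation.ReflTransGen (fun i j : Fin (n + 1) => J j i ≠ 0)
      0 (Fin.last n)) :
    (J.submatrix (Fin.succAbove 0) (Fin.succAbove (Fin.last n))).det = 0 := by
  classical
  set R : Fin (n+1) → Fin (n+1) → Prop := fun i j => J j i ≠ 0 with hR
  set S : Finset (Fin (n+1)) := Finset.univ.filter (fun i => Relation.ReflTransGen R 0 i)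
    with hS
  have hmemS : ∀ i, i ∈ S ↔ Relation.ReflTransGen R 0 i := by
    intro i; simp [hS]
  have h0S : (0 : Fin (n+1)) ∈ S := (hmemS 0).mpr Relation.ReflTransGen.refl
  have hlastS : Fin.last n ∉ S := fun h => hpath ((hmemS _).mp h)
  have hclosed : ∀ i ∈ S, ∀ j, J j i ≠ 0 → j ∈ S := by
    intro i hi j hij
    exact (hmemS j).mpr (Relation.ReflTransGen.tail ((hmemS i).mp hi) hij)
  -- the zero block
  set A : Finset (Fin n) := Finset.univ.filter (fun a => a.succ ∉ S) with hA
  set B : Finset (Fin n) := Finset.univ.filter (fun b => b.castSucc ∈ S) with hB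
  apply det_eq_zero_of_zero_block _ A B
  · -- cardinality
    have hBcard : B.card = S.card := by
      have himg : B.image Fin.castSucc = S := by
        apply Finset.ext
        intro x
        simp only [Finset.mem_image, hB, Finset.mem_filter, Finset.mem_univ, true_and]
        constructor
        · rintro ⟨b, hb, rfl⟩; exact hb
        · intro hx
          have hxne : x ≠ Fin.last n := fun h => hlastS (h ▸ hx)
          refine ⟨x.castPred hxne, ?_, by simp⟩
          simpa using hx
      rw [← himg, Finset.card_image_of_injective _ (Fin.castSucc_injective n)]
    have hAcard : A.card + S.card = n + 1 := by
      have hAc : Aᶜ = Finset.univ.filter (fun a : Fin n => a.succ ∈ S) := by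
        apply Finset.ext; intro a
        simp [hA]
      have himg : Aᶜ.image Fin.succ = S.erase 0 := by
        apply Finset.ext
        intro x
        rw [hAc]
        simp only [Finset.mem_image, Finset.mem_filter, Finset.mem_univ, true_and,
          Finset.mem_erase]
        constructor
        · rintro ⟨b, hb, rfl⟩; exact ⟨Fin.succ_ne_zero b, hb⟩
        · rintro ⟨hx0, hx⟩
          refine ⟨x.pred hx0, ?_, by simp⟩
          simpa using hx
      have h1 : Aᶜ.card = S.card - 1 := by
        rw [← Finset.card_image_of_injective Aᶜ (Fin.succ_injective n), himg,
          Finset.card_erase_of_mem h0S]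
      have h2 : Aᶜ.card = n - A.card := by
        have := Finset.card_compl A
        simpa using this
      have hScard1 : 1 ≤ S.card := Finset.card_pos.mpr ⟨0, h0S⟩
      have hScard2 : S.card ≤ n + 1 := by
        simpa using Finset.card_le_card (Finset.subset_univ S)
      have hAle : A.card ≤ n := by
        simpa using Finset.card_le_card (Finset.subset_univ A)
      omega
    omega
  · intro a ha b hb
    simp only [hA, hB, Finset.mem_filter, Finset.mem_univ, true_and] at ha hb
    simp only [Matrix.submatrix_apply]
    rw [Fin.zero_succAbove, Fin.succAbove_last]
    by_contra hne
    exact ha (hclosed _ hb _ hne)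
end

section
/- Consider the system ẋ₁ = u - 2x₁, ẋ₂ = x₁ + x₃ - 2x₂² + x₃²/4, ẋ₃ = -7x₃/4 + x₂², ẋ₄ = x₁ + 3x₃/4 - x₄ on ℝ⁴_{≥0} with parameter u ∈ [0, 12.5]. Its nonnegative steady states are exactly given by the two branches x₁ = u/2, x₃ = 5 ± sqrt(25 - 2u), x₂ = (√7/2)·sqrt(5 ± sqrt(25 - 2u)), x₄ = u/2 + 15/4 ± (3/4)·sqrt(25 - 2u). -/
set_option maxHeartbeats 1000000 in
/-- The nonnegative steady states of ẋ₁ = u - 2x₁, ẋ₂ = x₁ + x₃ - 2x₂² + x₃²/4,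
ẋ₃ = -7x₃/4 + x₂², ẋ₄ = x₁ + 3x₃/4 - x₄ with u ∈ [0, 12.5] are exactly the two branches
x₁ = u/2, x₃ = 5 ± √(25-2u), x₂ = (√7/2)·√(5 ± √(25-2u)), x₄ = u/2 + 15/4 ± (3/4)√(25-2u). -/
theorem stmt_13 (u : ℝ) (hu : u ∈ Set.Icc (0 : ℝ) 12.5)
    (x1 x2 x3 x4 : ℝ) (h1 : 0 ≤ x1) (h2 : 0 ≤ x2) (h3 : 0 ≤ x3) (h4 : 0 ≤ x4) :
    (u - 2 * x1 = 0 ∧ x1 + x3 - 2 * x2 ^ 2 + x3 ^ 2 / 4 = 0 ∧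
      -(7 * x3) / 4 + x2 ^ 2 = 0 ∧ x1 + 3 * x3 / 4 - x4 = 0) ↔
    ((x1 = u / 2 ∧ x3 = 5 + Real.sqrt (25 - 2 * u) ∧
        x2 = Real.sqrt 7 / 2 * Real.sqrt (5 + Real.sqrt (25 - 2 * u)) ∧
        x4 = u / 2 + 15 / 4 + 3 / 4 * Real.sqrt (25 - 2 * u)) ∨
      (x1 = u / 2 ∧ x3 = 5 - Real.sqrt (25 - 2 * u) ∧
        x2 = Real.sqrt 7 / 2 * Real.sqrt (5 - Real.sqrt (25 - 2 * u)) ∧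
        x4 = u / 2 + 15 / 4 - 3 / 4 * Real.sqrt (25 - 2 * u))) := by
  obtain ⟨hu0, hu1⟩ := hu
  have hu1' : u ≤ 12.5 := hu1
  have key : ∀ a b : ℝ, 0 ≤ a → 0 ≤ b → a ^ 2 = b ^ 2 → a = b := by
    intro a b ha hb h
    rw [← Real.sqrt_sq ha, h, Real.sqrt_sq hb]
  set s := Real.sqrt (25 - 2 * u) with hsdef
  have h25 : (0:ℝ) ≤ 25 - 2 * u := by nlinarith
  have hss : s ^ 2 = 25 - 2 * u := Real.sq_sqrt h25
  have hs0 : 0 ≤ s := Real.sqrt_nonneg _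
  have hs5 : s ≤ 5 := by nlinarith
  have hsq7 : Real.sqrt 7 ^ 2 = 7 := Real.sq_sqrt (by norm_num)
  constructor
  · rintro ⟨e1, e2, e3, e4⟩
    have hx1 : x1 = u / 2 := by linarith
    have hfac : (x3 - 5 - s) * (x3 - 5 + s) = 0 := by nlinarith
    rcases mul_eq_zero.mp hfac with hc | hc
    · left
      have hx3 : x3 = 5 + s := by linarith
      have hpos : (0:ℝ) ≤ 5 + s := by linarith
      refine ⟨hx1, hx3, ?_, by linarith⟩
      apply key _ _ h2 (by positivity)
      have := Real.sq_sqrt hpos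
      nlinarith
    · right
      have hx3 : x3 = 5 - s := by linarith
      have hpos : (0:ℝ) ≤ 5 - s := by linarith
      refine ⟨hx1, hx3, ?_, by linarith⟩
      apply key _ _ h2 (by positivity)
      have := Real.sq_sqrt hpos
      nlinarith
  · rintro (⟨hx1, hx3, hx2, hx4⟩ | ⟨hx1, hx3, hx2, hx4⟩)
    · have hpos : (0:ℝ) ≤ 5 + s := by linarith
      have hsq : Real.sqrt (5 + s) ^ 2 = 5 + s := Real.sq_sqrt hpos
      have hx2sq : x2 ^ 2 = 7 / 4 * (5 + s) := by
        rw [hx2, mul_pow, div_pow, hsq7, hsq]; ring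
      have hx3sq : x3 ^ 2 = 50 + 10 * s - 2 * u := by
        rw [hx3]; ring_nf; linarith [hss]
      refine ⟨by linarith, by linarith, by linarith, by linarith⟩
    · have hpos : (0:ℝ) ≤ 5 - s := by linarith
      have hsq : Real.sqrt (5 - s) ^ 2 = 5 - s := Real.sq_sqrt hpos
      have hx2sq : x2 ^ 2 = 7 / 4 * (5 - s) := by
        rw [hx2, mul_pow, div_pow, hsq7, hsq]; ring
      have hx3sq : x3 ^ 2 = 50 - 10 * s - 2 * u := by
        rw [hx3]; ring_nf; linarith [hss]
      refine ⟨by linarith, by linarith, by linarith, by linarith⟩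
end

section
/- The 4×4 matrix J(u) = [[-2,0,0,0],[1,-4x₂,1+x₃/2,0],[0,2x₂,-7/4,0],[1,0,3/4,-1]] evaluated at the steady-state branch x₂ = (√7/2)·sqrt(5 - sqrt(25-2u)), x₃ = 5 - sqrt(25-2u), for u ∈ (0, 12.5), has eigenvalues -2 and -1, and its remaining 2×2 block [[-4x₂, 1+x₃/2],[2x₂,-7/4]] has negative trace and positive determinant, hence all eigenvalues of J(u) have negative real part. -/
open Matrix

lemma quad_root_re_neg (t d : ℝ) (ht : 0 < t) (hd : 0 < d) (μ : ℂ)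
    (h : μ^2 + t*μ + d = 0) : μ.re < 0 := by
  have him := congrArg Complex.im h
  have hre := congrArg Complex.re h
  simp [pow_two, Complex.mul_im, Complex.mul_re] at him hre
  have key : μ.im * (2*μ.re + t) = 0 := by linarith [him]
  rcases mul_eq_zero.mp key with h0 | h0
  · nlinarith [sq_nonneg μ.re]
  · linarith

/-- On the stable branch x₂ = (√7/2)√(5 - √(25-2u)), x₃ = 5 - √(25-2u), u ∈ (0, 12.5), the
matrix J(u) = [[-2,0,0,0],[1,-4x₂,1+x₃/2,0],[0,2x₂,-7/4,0],[1,0,3/4,-1]] has eigenvalues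
-2 and -1, and its 2×2 block [[-4x₂,1+x₃/2],[2x₂,-7/4]] has negative trace and positive
determinant; hence all eigenvalues of J(u) have negative real part. -/
theorem stmt_15 (u : ℝ) (hu : u ∈ Set.Ioo (0 : ℝ) 12.5) :
    let x2 : ℝ := Real.sqrt 7 / 2 * Real.sqrt (5 - Real.sqrt (25 - 2 * u))
    let x3 : ℝ := 5 - Real.sqrt (25 - 2 * u)
    let J : Matrix (Fin 4) (Fin 4) ℝ :=
      !![-2, 0, 0, 0;
         1, -4 * x2, 1 + x3 / 2, 0;
         0, 2 * x2, -7/4, 0;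
         1, 0, 3/4, -1]
    let B : Matrix (Fin 2) (Fin 2) ℝ := !![-4 * x2, 1 + x3 / 2; 2 * x2, -7/4]
    (-2 : ℝ) ∈ spectrum ℝ J ∧ (-1 : ℝ) ∈ spectrum ℝ J ∧
      B.trace < 0 ∧ 0 < B.det ∧
      ∀ μ : ℂ, μ ∈ spectrum ℂ (J.map Complex.ofReal) → μ.re < 0 := by
  intro x2 x3 J B
  obtain ⟨hu0, hu1⟩ := hu
  -- basic positivity facts
  have h25 : (0:ℝ) < 25 - 2*u := by norm_num at hu1 ⊢; linarith
  have hs_pos : 0 < Real.sqrt (25 - 2*u) := Real.sqrt_pos.mpr h25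
  have hs_lt : Real.sqrt (25 - 2*u) < 5 := by
    have := Real.sqrt_lt_sqrt (by positivity) (show 25 - 2*u < 25 by linarith)
    simpa [Real.sqrt_eq_iff_eq_sq, show Real.sqrt 25 = 5 by
      rw [show (25:ℝ) = 5^2 by norm_num, Real.sqrt_sq]; norm_num] using this
  have hx3_pos : 0 < x3 := by simp only [x3]; linarith
  have hx3_lt : x3 < 5 := by simp only [x3]; linarith
  have hx2_pos : 0 < x2 := by
    have h7 : 0 < Real.sqrt 7 := Real.sqrt_pos.mpr (by norm_num)
    have : 0 < Real.sqrt (5 - Real.sqrt (25 - 2*u)) := Real.sqrt_pos.mpr (by simp only [x3] at hx3_pos; linarith)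
    simp only [x2]; positivity
  -- trace and det of B
  have htr : B.trace < 0 := by
    simp [B, Matrix.trace_fin_two]; linarith
  have hdet : 0 < B.det := by
    simp [B, Matrix.det_fin_two]
    nlinarith
  refine ⟨?_, ?_, htr, hdet, ?_⟩
  · rw [spectrum.mem_iff]
    intro h
    rw [Matrix.isUnit_iff_isUnit_det] at h
    have hd : ((algebraMap ℝ (Matrix (Fin 4) (Fin 4) ℝ)) (-2) - J).det = 0 := by
      have : (algebraMap ℝ (Matrix (Fin 4) (Fin 4) ℝ)) (-2) - J =
          !![0, 0, 0, 0; -1, -2+4*x2, -(1+x3/2), 0; 0, -2*x2, -2+7/4, 0; -1, 0, -3/4, -2+1] := by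
        ext i j
        fin_cases i <;> fin_cases j <;>
          simp [J, Matrix.algebraMap_matrix_apply, Matrix.vecHead, Matrix.vecTail] <;> ring
      rw [this]
      simp [Matrix.det_succ_row_zero, Fin.sum_univ_succ]
    rw [hd] at h
    exact h.ne_zero rfl
  · rw [spectrum.mem_iff]
    intro h
    rw [Matrix.isUnit_iff_isUnit_det] at h
    have hd : ((algebraMap ℝ (Matrix (Fin 4) (Fin 4) ℝ)) (-1) - J).det = 0 := by
      have : (algebraMap ℝ (Matrix (Fin 4) (Fin 4) ℝ)) (-1) - J =
          !![-1+2, 0, 0, 0; -1, -1+4*x2, -(1+x3/2), 0; 0, -2*x2, -1+7/4, 0; -1, 0, -3/4, 0] := by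
        ext i j
        fin_cases i <;> fin_cases j <;>
          simp [J, Matrix.algebraMap_matrix_apply, Matrix.vecHead, Matrix.vecTail] <;> ring
      rw [this]
      simp [Matrix.det_succ_row_zero, Fin.sum_univ_succ]
    rw [hd] at h
    exact h.ne_zero rfl
  · intro μ hμ
    rw [spectrum.mem_iff] at hμ
    have hdet0 : ((algebraMap ℂ (Matrix (Fin 4) (Fin 4) ℂ)) μ - J.map Complex.ofReal).det = 0 := by
      by_contra hne
      exact hμ ((Matrix.isUnit_iff_isUnit_det _).mpr (isUnit_iff_ne_zero.mpr hne))
    have hfact : ((algebraMap ℂ (Matrix (Fin 4) (Fin 4) ℂ)) μ - J.map Complex.ofReal).det =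
        (μ + 2) * ((μ + 1) * (μ^2 + (4*x2 + 7/4)*μ + (x2*(5 - x3) : ℝ))) := by
      have hM : (algebraMap ℂ (Matrix (Fin 4) (Fin 4) ℂ)) μ - J.map Complex.ofReal =
          !![μ+2, 0, 0, 0; -1, μ+4*(x2:ℂ), -(1+(x3:ℂ)/2), 0; 0, -2*(x2:ℂ), μ+7/4, 0; -1, 0, -3/4, μ+1] := by
        ext i j
        fin_cases i <;> fin_cases j <;>
          simp [J, Matrix.algebraMap_matrix_apply, Matrix.map_apply, Matrix.vecHead, Matrix.vecTail] <;> push_cast <;> ring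
      rw [hM]
      simp [Matrix.det_succ_row_zero, Fin.sum_univ_succ, Matrix.vecHead, Matrix.vecTail]
      push_cast
      ring_nf
      tauto
    rw [hfact] at hdet0
    rcases mul_eq_zero.mp hdet0 with h2 | hrest
    · have : μ = -2 := by linear_combination h2
      rw [this]; norm_num
    rcases mul_eq_zero.mp hrest with h1 | hq
    · have : μ = -1 := by linear_combination h1
      rw [this]; norm_num
    · exact quad_root_re_neg (4*x2 + 7/4) (x2*(5 - x3)) (by linarith)
        (mul_pos hx2_pos (by linarith : (0:ℝ) < 5 - x3)) μ (by push_cast at hq ⊢; linear_combination hq)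
end

section
/- At steady state of the kinetic proofreading chain with rates k, k₀,…,k_{N-1}, ℓ₀,…,ℓ_N > 0, the complex concentrations satisfy C_i = a_i·C_N for i = 0,…,N-1, where a_{N-1} = ℓ_N/k_{N-1}, and a_i = ℓ_N·∏_{j=i+1}^{N-1}(k_j + ℓ_j) / ∏_{j=i}^{N-1} k_j for i ≤ N-2. Consequently C_i = A_i·C_T with A_i = a_i / Σ_{j=0}^N a_j (setting a_N = 1) and C_T = Σ_{j=0}^N C_j. -/
open Finset

/-- At steady state of the kinetic proofreading chain with positive rates k, ℓ, the complex
concentrations satisfy C_i = a_i·C_N for i < N, where a_i = ℓ_N·∏_{j=i+1}^{N-1}(k_j+ℓ_j) /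
∏_{j=i}^{N-1} k_j (so a_{N-1} = ℓ_N/k_{N-1}); consequently, setting a_N = 1 and
C_T = Σ_{j=0}^N C_j, one has C_i = (a_i / Σ_{j=0}^N a_j)·C_T for all i ≤ N. -/
theorem stmt_16 (N : ℕ) (hN : 1 ≤ N) (k l C : ℕ → ℝ)
    (hk : ∀ i < N, 0 < k i) (hl : ∀ i ≤ N, 0 < l i) (hC : ∀ i ≤ N, 0 ≤ C i)
    (hss : ∀ i, 1 ≤ i → i ≤ N - 1 → k (i - 1) * C (i - 1) = (k i + l i) * C i)
    (hssN : k (N - 1) * C (N - 1) = l N * C N) :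
    let a : ℕ → ℝ := fun i => if i = N then 1 else
      l N * (∏ j ∈ Finset.Ico (i + 1) N, (k j + l j)) / ∏ j ∈ Finset.Ico i N, k j
    (∀ i < N, C i = a i * C N) ∧
    (∀ i ≤ N, C i = (a i / ∑ j ∈ Finset.range (N + 1), a j)
        * ∑ j ∈ Finset.range (N + 1), C j) := by
  intro a
  have hlN : 0 < l N := hl N le_rfl
  -- closed form of a on i < N
  have ha_def : ∀ i < N, a i =
      l N * (∏ j ∈ Finset.Ico (i + 1) N, (k j + l j)) / ∏ j ∈ Finset.Ico i N, k j := by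
    intro i hi
    simp only [a, if_neg (Nat.ne_of_lt hi)]
  have ha_pos : ∀ i < N, 0 < a i := by
    intro i hi
    rw [ha_def i hi]
    apply div_pos
    · apply mul_pos hlN
      exact Finset.prod_pos (fun j hj => by
        have := Finset.mem_Ico.mp hj
        exact add_pos (hk j this.2) (hl j this.2.le))
    · exact Finset.prod_pos (fun j hj => hk j (Finset.mem_Ico.mp hj).2)
  -- main recurrence result
  have key : ∀ i < N, C i = a i * C N := by
    have base : C (N - 1) = a (N - 1) * C N := by
      have hN1 : N - 1 < N := Nat.sub_lt hN one_pos
      have hkN : 0 < k (N - 1) := hk _ hN1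
      rw [ha_def _ hN1]
      have hNN : N - 1 + 1 = N := Nat.succ_pred_eq_of_pos hN
      rw [hNN, Finset.Ico_self, Finset.prod_empty]
      rw [show Finset.Ico (N-1) N = {N-1} by rw [← Nat.Ico_succ_singleton, hNN]]
      rw [Finset.prod_singleton]
      field_simp
      linarith [hssN]
    have step : ∀ d, ∀ i, i + d + 1 = N → C i = a i * C N := by
      intro d
      induction d with
      | zero =>
        intro i hi
        have : i = N - 1 := by omega
        rw [this]; exact base
      | succ d ih =>
        intro i hi
        have hi1 : i + 1 + d + 1 = N := by omega
        have hCi1 := ih (i + 1) hi1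
        have hiN : i < N := by omega
        have hi1N : i + 1 < N := by omega
        have hrec := hss (i + 1) (by omega) (by omega)
        simp only [Nat.add_sub_cancel] at hrec
        have hki : k i ≠ 0 := (hk i hiN).ne'
        -- a i = (k (i+1) + l (i+1)) / k i * a (i+1)
        have harel : k i * a i = (k (i + 1) + l (i + 1)) * a (i + 1) := by
          rw [ha_def i hiN, ha_def (i + 1) hi1N]
          have h1 : ∏ j ∈ Finset.Ico (i + 1) N, (k j + l j)
              = (k (i+1) + l (i+1)) * ∏ j ∈ Finset.Ico (i + 2) N, (k j + l j) := by
            exact Finset.prod_eq_prod_Ico_succ_bot hi1N _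
          have h2 : ∏ j ∈ Finset.Ico i N, k j
              = k i * ∏ j ∈ Finset.Ico (i + 1) N, k j := by
            exact Finset.prod_eq_prod_Ico_succ_bot hiN _
          rw [h1, h2]
          have hp : (∏ j ∈ Finset.Ico (i + 1) N, k j) ≠ 0 :=
            (Finset.prod_pos (fun j hj => hk j (Finset.mem_Ico.mp hj).2)).ne'
          field_simp
        have : k i * C i = (k (i + 1) + l (i + 1)) * C (i + 1) := hrec
        rw [hCi1] at this
        have : k i * C i = k i * (a i * C N) := by
          rw [this, ← mul_assoc, ← harel]; ring
        exact mul_left_cancel₀ hki this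
    intro i hi
    exact step (N - 1 - i) i (by omega)
  refine ⟨key, ?_⟩
  -- sum identity
  have haN : a N = 1 := by simp [a]
  have hS : 0 < ∑ j ∈ Finset.range (N + 1), a j := by
    apply Finset.sum_pos
    · intro j hj
      rcases Nat.lt_or_ge j N with h | h
      · exact ha_pos j h
      · have : j = N := by have := Finset.mem_range.mp hj; omega
        rw [this, haN]; norm_num
    · exact ⟨0, Finset.mem_range.mpr (by omega)⟩
  have hCT : ∑ j ∈ Finset.range (N + 1), C j
      = (∑ j ∈ Finset.range (N + 1), a j) * C N := by
    rw [Finset.sum_mul]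
    apply Finset.sum_congr rfl
    intro j hj
    rcases Nat.lt_or_ge j N with h | h
    · exact key j h
    · have : j = N := by have := Finset.mem_range.mp hj; omega
      rw [this, haN, one_mul]
  intro i hi
  rw [hCT]
  rcases Nat.lt_or_ge i N with h | h
  · rw [key i h]
    field_simp
  · have : i = N := by omega
    rw [this, haN]
    field_simp
end
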